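/- Let p > 0 and s > 1. Then the polynomial spiral S_p is a (1/s)-Hölder arc, i.e., there exist a homeomorphism f from [0,1] onto S_p and H > 0 with |f(x) − f(y)| ≤ H|x − y|^{1/s} for all x, y ∈ [0,1], if and only if ps > 1. -/

import Mathlib

open scoped ENNReal

/-- The parametrizing map `t ↦ φ(t) e^{it}` of a spiral. -/
noncomputable def spiralMap (φ : ℝ → ℝ) : ℝ → ℂ :=
  fun t => (φ t : ℂ) * Complex.exp (t * Complex.I)

/-- The spiral `S_φ = {φ(t) e^{it} : t ∈ [2π, ∞)} ∪ {0}`. -/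
noncomputable def spiral (φ : ℝ → ℝ) : Set ℂ :=
  spiralMap φ '' Set.Ici (2 * Real.pi) ∪ {0}

/-- `φ_j = max{φ(t) : t ∈ [2πj, 2π(j+1)]}`. -/
noncomputable def phiMax (φ : ℝ → ℝ) (j : ℕ) : ℝ :=
  sSup (φ '' Set.Icc (2 * Real.pi * j) (2 * Real.pi * (j + 1)))

/-- `S_φ` is a spiral arc: the map `t ↦ φ(t) e^{it}` is injective on `[2π, ∞)`. -/
def IsSpiralArc (φ : ℝ → ℝ) : Prop :=
  Set.InjOn (spiralMap φ) (Set.Ici (2 * Real.pi))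

/-- `S_φ` is almost circular with constant `C`: the length of each full turn `S_φ^j`
(the total variation of `spiralMap φ` over `[2πj, 2π(j+1)]`) is at most `C * φ_j`. -/
def IsAlmostCircularWith (φ : ℝ → ℝ) (C : ℝ) : Prop :=
  ∀ j : ℕ, 1 ≤ j →
    eVariationOn (spiralMap φ) (Set.Icc (2 * Real.pi * j) (2 * Real.pi * (j + 1)))
      ≤ ENNReal.ofReal (C * phiMax φ j)

/-- `S` is an `α`-Hölder arc: there is a homeomorphism `f` from `[0,1]` onto `S`
(equivalently, a continuous injective surjection from the compact set `[0,1]`)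
and `H > 0` with `|f x - f y| ≤ H |x - y| ^ α`. -/
def IsHolderArc (S : Set ℂ) (α : ℝ) : Prop :=
  ∃ f : ℝ → ℂ, Set.InjOn f (Set.Icc 0 1) ∧ f '' Set.Icc 0 1 = S ∧
    ∃ H > 0, ∀ x ∈ Set.Icc (0:ℝ) 1, ∀ y ∈ Set.Icc (0:ℝ) 1,
      ‖f x - f y‖ ≤ H * |x - y| ^ α

/-- The polynomial spiral `S_p = {t^{-p} e^{it} : t ∈ [2π, ∞)} ∪ {0}`. -/
noncomputable def polySpiral (p : ℝ) : Set ℂ :=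
  spiral (fun t => t ^ (-p))

/-!
Necessity: the half-turn points `t = π (k + 2)` of `S_p` are at distance `≍ k^{-p}` from each
other. The modulus determines a point of `S_p`, so `‖f‖` is strictly monotone for any injective
continuous parametrization `f` of `S_p` by `[0, 1]`; hence the preimages of the half-turn points
are monotone and their gaps are summable. An `α`-Hölder bound makes these gaps `≳ k^{-p/α}`,
which forces `p / α > 1`.

Sufficiency: for `α < p` reparametrize by `t = 2π x^{-β}` with `β = α / (p - α)`. With
`γ = β + 1`, the radius is `≍ x^{αγ}` and the speed is `≲ x^{(α-1)γ}`. Comparing `y - x` with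
`x^γ`, the speed bound gives the Hölder estimate for close points and the radius bound for far ones.
-/

open Real Set Filter Topology

theorem rpow_inv_div_le_of_le_mul_rpow {d H δ α : ℝ} (hd : 0 ≤ d) (hH : 0 < H) (hδ : 0 ≤ δ)
    (hα : 0 < α) (h : d ≤ H * δ ^ α) : (d / H) ^ α⁻¹ ≤ δ :=
  (rpow_inv_le_iff_of_pos (div_nonneg hd hH.le) hδ hα).2 ((div_le_iff₀' hH).2 h)

theorem summable_abs_sub_succ_of_mem_Icc {X : ℕ → ℝ} {a b : ℝ} (hX : Monotone X ∨ Antitone X)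
    (hab : ∀ k, X k ∈ Icc a b) : Summable fun k => |X (k + 1) - X k| := by
  wlog hmono : Monotone X generalizing X a b
  · have hanti : Antitone X := hX.resolve_left hmono
    simpa only [Pi.neg_apply, neg_sub_neg, abs_sub_comm] using
      this (X := -X) (a := -b) (b := -a) (Or.inl hanti.neg)
        (fun k => ⟨neg_le_neg (hab k).2, neg_le_neg (hab k).1⟩) hanti.neg
  refine summable_of_sum_range_le (c := b - a) (fun _ => abs_nonneg _) fun n => ?_
  calc ∑ k ∈ Finset.range n, |X (k + 1) - X k|
      = ∑ k ∈ Finset.range n, (X (k + 1) - X k) :=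
        Finset.sum_congr rfl fun k _ => abs_of_nonneg (sub_nonneg.2 (hmono k.le_succ))
    _ = X n - X 0 := Finset.sum_range_sub X n
    _ ≤ b - a := sub_le_sub (hab n).2 (hab 0).1

theorem lt_of_summable_mul_nat_add_rpow_neg_div {c H p α : ℝ} (hc : 0 < c) (hH : 0 < H)
    (hα : 0 < α) (h : Summable fun k : ℕ => ((c * (k + 3)) ^ (-p) / H) ^ α⁻¹) : α < p := by
  have hterm (k : ℕ) : ((c * (k + 3)) ^ (-p) / H) ^ α⁻¹ =
      (c ^ (-p) / H) ^ α⁻¹ * ((k + 3 : ℕ) : ℝ) ^ (-p * α⁻¹) := by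
    push_cast
    rw [mul_rpow hc.le (by positivity), mul_div_right_comm,
      mul_rpow (by positivity) (by positivity), ← rpow_mul (by positivity)]
  have hshift : Summable fun k : ℕ => ((k + 3 : ℕ) : ℝ) ^ (-p * α⁻¹) := by
    rw [← summable_mul_left_iff (rpow_pos_of_pos (div_pos (rpow_pos_of_pos hc _) hH) _).ne']
    simpa only [hterm] using h
  have hexp := summable_nat_rpow.1
    ((summable_nat_add_iff (f := fun n : ℕ => (n : ℝ) ^ (-p * α⁻¹)) 3).1 hshift)
  rwa [neg_mul, neg_lt_neg_iff, ← div_eq_mul_inv, one_lt_div hα] at hexp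

section HolderEstimates

variable {E : Type*} [NormedAddCommGroup E] {f : ℝ → E} {α : ℝ}

theorem continuousOn_of_norm_sub_le_mul_rpow {s : Set ℝ} {H : ℝ} (hα : 0 < α)
    (hf : ∀ x ∈ s, ∀ y ∈ s, ‖f x - f y‖ ≤ H * |x - y| ^ α) : ContinuousOn f s := by
  intro x₀ hx₀
  have hbound : Tendsto (fun x => H * |x - x₀| ^ α) (𝓝[s] x₀) (𝓝 0) := by
    have hcont : Continuous fun x : ℝ => H * |x - x₀| ^ α :=
      continuous_const.mul ((continuous_sub_right x₀).abs.rpow_const fun _ => Or.inr hα.le)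
    simpa [zero_rpow hα.ne'] using (hcont.tendsto x₀).mono_left nhdsWithin_le_nhds
  exact tendsto_iff_norm_sub_tendsto_zero.2 <|
    squeeze_zero' (Eventually.of_forall fun _ => norm_nonneg _)
      (eventually_nhdsWithin_of_forall fun x hx => hf x hx x₀ hx₀) hbound

theorem norm_sub_le_of_norm_deriv_le_rpow [NormedSpace ℝ E] {M e x y : ℝ}
    (hM : 0 ≤ M) (he : e ≤ 0) (hx : 0 < x) (hxy : x ≤ y)
    (hf : ∀ ξ ∈ Icc x y, ∃ f', HasDerivAt f f' ξ ∧ ‖f'‖ ≤ M * ξ ^ e) :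
    ‖f y - f x‖ ≤ M * x ^ e * (y - x) := by
  have hderiv : ∀ ξ ∈ Icc x y, HasDerivAt f (deriv f ξ) ξ ∧ ‖deriv f ξ‖ ≤ M * ξ ^ e := by
    intro ξ hξ
    obtain ⟨f', hf', hbound⟩ := hf ξ hξ
    exact ⟨hf'.differentiableAt.hasDerivAt, hf'.deriv ▸ hbound⟩
  refine norm_image_sub_le_of_norm_deriv_le_segment' (fun ξ hξ => (hderiv ξ hξ).1.hasDerivWithinAt)
    (fun ξ hξ => ?_) y ⟨hxy, le_rfl⟩
  calc ‖deriv f ξ‖ ≤ M * ξ ^ e := (hderiv ξ (Ico_subset_Icc_self hξ)).2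
    _ ≤ M * x ^ e := mul_le_mul_of_nonneg_left (rpow_le_rpow_of_nonpos hx hξ.1 he) hM

theorem norm_sub_le_mul_rpow_of_growth_of_lipschitz {γ K₁ K₂ : ℝ} (hα0 : 0 < α) (hα1 : α ≤ 1)
    (hγ : 1 ≤ γ) (hK₁ : 0 ≤ K₁) (hK₂ : 0 ≤ K₂)
    (hgrowth : ∀ x ∈ Icc (0 : ℝ) 1, ‖f x‖ ≤ K₁ * x ^ (α * γ))
    (hlip : ∀ x y, 0 < x → x ≤ y → y ≤ 1 → ‖f y - f x‖ ≤ K₂ * x ^ ((α - 1) * γ) * (y - x))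
    {x y : ℝ} (hx : 0 ≤ x) (hxy : x ≤ y) (hy : y ≤ 1) :
    ‖f y - f x‖ ≤ (2 * 2 ^ (α * γ) * K₁ + K₂) * (y - x) ^ α := by
  set δ := y - x
  have hδ0 : 0 ≤ δ := sub_nonneg.2 hxy
  have hδ1 : δ ≤ 1 := by linarith
  have hγ0 : 0 < γ := by linarith
  rcases le_or_gt (x ^ γ) δ with hfar | hclose
  · have hxδ : x ≤ δ ^ γ⁻¹ := (le_rpow_inv_iff_of_pos hx hδ0 hγ0).2 hfar
    have hδδ : δ ≤ δ ^ γ⁻¹ := by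
      simpa using rpow_le_rpow_of_exponent_ge' hδ0 hδ1 (inv_nonneg.2 hγ0.le)
        (inv_le_one_of_one_le₀ hγ)
    have hyδ : y ^ (α * γ) ≤ 2 ^ (α * γ) * δ ^ α := calc
      y ^ (α * γ) ≤ (2 * δ ^ γ⁻¹) ^ (α * γ) := by
        apply rpow_le_rpow (by linarith) (by linarith) (by positivity)
      _ = 2 ^ (α * γ) * δ ^ α := by
        rw [mul_rpow zero_le_two (by positivity), ← rpow_mul hδ0,
          show γ⁻¹ * (α * γ) = α by field_simp]
    have hxyγ : x ^ (α * γ) ≤ y ^ (α * γ) := rpow_le_rpow hx hxy (by positivity)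
    calc ‖f y - f x‖ ≤ ‖f y‖ + ‖f x‖ := norm_sub_le _ _
      _ ≤ K₁ * y ^ (α * γ) + K₁ * x ^ (α * γ) :=
        add_le_add (hgrowth y ⟨by linarith, hy⟩) (hgrowth x ⟨hx, by linarith⟩)
      _ ≤ 2 * 2 ^ (α * γ) * K₁ * δ ^ α := by nlinarith
      _ ≤ (2 * 2 ^ (α * γ) * K₁ + K₂) * δ ^ α := by
        gcongr
        exact le_add_of_nonneg_right hK₂
  · have hx0 : 0 < x := by
      refine hx.lt_of_ne fun hx0 => ?_
      rw [← hx0, zero_rpow hγ0.ne'] at hclose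
      linarith
    have hδsplit : δ ^ α * δ ^ (1 - α) = δ := by
      rw [← rpow_add' hδ0 (by norm_num), add_sub_cancel, rpow_one]
    have hδx : δ ^ (1 - α) ≤ x ^ (γ * (1 - α)) := by
      rw [rpow_mul hx0.le]
      exact rpow_le_rpow hδ0 hclose.le (by linarith)
    have hcancel : x ^ ((α - 1) * γ) * x ^ (γ * (1 - α)) = 1 := by
      rw [← rpow_add hx0, show (α - 1) * γ + γ * (1 - α) = 0 by ring, rpow_zero]
    calc ‖f y - f x‖ ≤ K₂ * x ^ ((α - 1) * γ) * δ := hlip x y hx0 hxy hy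
      _ = K₂ * x ^ ((α - 1) * γ) * (δ ^ α * δ ^ (1 - α)) := by rw [hδsplit]
      _ ≤ K₂ * x ^ ((α - 1) * γ) * (δ ^ α * x ^ (γ * (1 - α))) := by gcongr
      _ = K₂ * (x ^ ((α - 1) * γ) * x ^ (γ * (1 - α))) * δ ^ α := by ring
      _ ≤ (2 * 2 ^ (α * γ) * K₁ + K₂) * δ ^ α := by
        rw [hcancel, mul_one]
        gcongr
        exact le_add_of_nonneg_left (by positivity)

theorem exists_holder_bound_of_growth_of_lipschitz {γ K₁ K₂ : ℝ} (hα0 : 0 < α) (hα1 : α ≤ 1)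
    (hγ : 1 ≤ γ) (hK₁ : 0 ≤ K₁) (hK₂ : 0 < K₂)
    (hgrowth : ∀ x ∈ Icc (0 : ℝ) 1, ‖f x‖ ≤ K₁ * x ^ (α * γ))
    (hlip : ∀ x y, 0 < x → x ≤ y → y ≤ 1 → ‖f y - f x‖ ≤ K₂ * x ^ ((α - 1) * γ) * (y - x)) :
    ∃ H > 0, ∀ x ∈ Icc (0 : ℝ) 1, ∀ y ∈ Icc (0 : ℝ) 1, ‖f x - f y‖ ≤ H * |x - y| ^ α := by
  refine ⟨2 * 2 ^ (α * γ) * K₁ + K₂, by positivity, fun x hx y hy => ?_⟩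
  wlog hxy : y ≤ x generalizing x y
  · rw [norm_sub_rev, abs_sub_comm]
    exact this y hy x hx (le_of_not_ge hxy)
  rw [abs_of_nonneg (sub_nonneg.2 hxy)]
  exact norm_sub_le_mul_rpow_of_growth_of_lipschitz hα0 hα1 hγ hK₁ hK₂.le hgrowth hlip
    hy.1 hxy hx.2

end HolderEstimates

theorem exists_hasDerivAt_polar_norm_le {r θ : ℝ → ℝ} {r' θ' x : ℝ} (hr : HasDerivAt r r' x)
    (hθ : HasDerivAt θ θ' x) :
    ∃ f', HasDerivAt (fun x => (r x : ℂ) * Complex.exp (θ x * Complex.I)) f' x ∧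
      ‖f'‖ ≤ |r'| + |r x| * |θ'| := by
  refine ⟨_, hr.ofReal_comp.mul (hθ.ofReal_comp.mul_const Complex.I).cexp, ?_⟩
  calc _ ≤ ‖(r' : ℂ) * Complex.exp (θ x * Complex.I)‖ +
        ‖(r x : ℂ) * (Complex.exp (θ x * Complex.I) * (θ' * Complex.I))‖ := norm_add_le _ _
    _ = |r'| + |r x| * |θ'| := by
      simp only [norm_mul, Complex.norm_real, Complex.norm_exp_ofReal_mul_I, Complex.norm_I,
        Real.norm_eq_abs, mul_one, one_mul]

theorem norm_spiralMap (φ : ℝ → ℝ) (t : ℝ) : ‖spiralMap φ t‖ = |φ t| := by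
  simp [spiralMap, Complex.norm_exp_ofReal_mul_I]

theorem norm_spiralMap_sub_spiralMap_add_pi (φ : ℝ → ℝ) (t : ℝ) :
    ‖spiralMap φ t - spiralMap φ (t + π)‖ = |φ t + φ (t + π)| := by
  have hhalf : spiralMap φ t - spiralMap φ (t + π) = spiralMap (fun u => φ u + φ (u + π)) t := by
    simp only [spiralMap]
    push_cast
    rw [add_mul, Complex.exp_add, Complex.exp_pi_mul_I]
    ring
  rw [hhalf, norm_spiralMap]

theorem norm_spiralMap_rpow_neg {p t : ℝ} (ht : 0 ≤ t) :
    ‖spiralMap (fun t => t ^ (-p)) t‖ = t ^ (-p) := by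
  rw [norm_spiralMap, abs_of_nonneg (rpow_nonneg ht _)]

theorem injOn_norm_polySpiral {p : ℝ} (hp : 0 < p) : InjOn (‖·‖) (polySpiral p) := by
  have hpos {t : ℝ} (ht : 2 * π ≤ t) : 0 < t := by linarith [pi_pos]
  rintro _ (⟨t, ht, rfl⟩ | rfl) _ (⟨u, hu, rfl⟩ | rfl) h <;> beta_reduce at h
  · rw [norm_spiralMap_rpow_neg (hpos ht).le, norm_spiralMap_rpow_neg (hpos hu).le] at h
    rw [(strictAntiOn_rpow_Ioi_of_exponent_neg (neg_lt_zero.2 hp)).injOn (hpos ht) (hpos hu) h]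
  · rw [norm_spiralMap_rpow_neg (hpos ht).le, norm_zero] at h
    exact absurd h (rpow_pos_of_pos (hpos ht) _).ne'
  · rw [norm_spiralMap_rpow_neg (hpos hu).le, norm_zero] at h
    exact absurd h.symm (rpow_pos_of_pos (hpos hu) _).ne'
  · rfl

theorem lt_of_isHolderArc_polySpiral {p α : ℝ} (hp : 0 < p) (hα : 0 < α)
    (h : IsHolderArc (polySpiral p) α) : α < p := by
  obtain ⟨f, hinj, himg, H, hH, hf⟩ := h
  have hcont : ContinuousOn f (Icc 0 1) := continuousOn_of_norm_sub_le_mul_rpow hα hf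
  have ht (k : ℕ) : 2 * π ≤ π * (k + 2) := by nlinarith [pi_pos, k.cast_nonneg (α := ℝ)]
  have hmem (k : ℕ) : spiralMap (fun t => t ^ (-p)) (π * (k + 2)) ∈ f '' Icc 0 1 :=
    himg ▸ Or.inl ⟨_, ht k, rfl⟩
  choose X hX hfX using hmem
  have hnorm (k : ℕ) : ‖f (X k)‖ = (π * (k + 2)) ^ (-p) := by
    rw [hfX, norm_spiralMap_rpow_neg (by positivity)]
  have hdec : StrictAnti fun k => ‖f (X k)‖ := strictAnti_nat_of_succ_lt fun k => by
    rw [hnorm, hnorm]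
    push_cast
    exact rpow_lt_rpow_of_neg (by positivity) (by nlinarith [pi_pos]) (neg_lt_zero.2 hp)
  have hXmono : Monotone X ∨ Antitone X := by
    have hinjnorm : InjOn (fun x => ‖f x‖) (Icc 0 1) :=
      (injOn_norm_polySpiral hp).comp hinj (himg ▸ mapsTo_image f _)
    rcases hcont.norm.strictMonoOn_of_injOn_Icc' zero_le_one hinjnorm with hmono | hanti
    · exact Or.inr fun i j hij => (hmono.le_iff_le (hX j) (hX i)).1 (hdec.antitone hij)
    · exact Or.inl fun i j hij => (hanti.le_iff_ge (hX j) (hX i)).1 (hdec.antitone hij)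
  have hgap (k : ℕ) : ((π * (k + 3)) ^ (-p) / H) ^ α⁻¹ ≤ |X (k + 1) - X k| := by
    refine rpow_inv_div_le_of_le_mul_rpow (by positivity) hH (abs_nonneg _) hα ?_
    have hsucc : π * (((k + 1 : ℕ) : ℝ) + 2) = π * (k + 2) + π := by push_cast; ring
    calc (π * (k + 3)) ^ (-p) ≤ |(π * (k + 2)) ^ (-p) + (π * (k + 2) + π) ^ (-p)| := by
          rw [show π * ((k : ℝ) + 2) + π = π * (k + 3) by ring]
          exact le_abs.2 (Or.inl (le_add_of_nonneg_left (by positivity)))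
      _ = ‖f (X (k + 1)) - f (X k)‖ := by
          rw [norm_sub_rev, hfX, hfX, hsucc, norm_spiralMap_sub_spiralMap_add_pi]
      _ ≤ H * |X (k + 1) - X k| ^ α := hf _ (hX _) _ (hX _)
  exact lt_of_summable_mul_nat_add_rpow_neg_div pi_pos hH hα
    ((summable_abs_sub_succ_of_mem_Icc hXmono hX).of_nonneg_of_le (fun _ => by positivity) hgap)

/-- The reparametrization `t = 2π x^{-β}` of `S_p`, on which `t^{-p} = (2π)^{-p} x^{pβ}`. -/
noncomputable def polySpiralParam (p β x : ℝ) : ℂ :=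
  (((2 * π) ^ (-p) * x ^ (p * β) : ℝ) : ℂ) * Complex.exp ((2 * π * x ^ (-β) : ℝ) * Complex.I)

section PolySpiralParam

variable {p β : ℝ}

theorem polySpiralParam_zero (hpβ : p * β ≠ 0) : polySpiralParam p β 0 = 0 := by
  simp [polySpiralParam, zero_rpow hpβ]

theorem polySpiralParam_eq_spiralMap {x : ℝ} (hx : 0 < x) :
    polySpiralParam p β x = spiralMap (fun t => t ^ (-p)) (2 * π * x ^ (-β)) := by
  rw [polySpiralParam, spiralMap]
  congr 2
  rw [mul_rpow (x := 2 * π) (by positivity) (by positivity), ← rpow_mul hx.le, neg_mul_neg,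
    mul_comm β]

theorem norm_polySpiralParam {x : ℝ} (hx : 0 ≤ x) :
    ‖polySpiralParam p β x‖ = (2 * π) ^ (-p) * x ^ (p * β) := by
  rw [polySpiralParam, norm_mul, Complex.norm_exp_ofReal_mul_I, mul_one, Complex.norm_real,
    Real.norm_eq_abs, abs_of_nonneg (by positivity)]

theorem injOn_polySpiralParam (hpβ : 0 < p * β) : InjOn (polySpiralParam p β) (Ici 0) := by
  intro x hx y hy h
  have hnorm := congrArg (‖·‖) h
  simp only [norm_polySpiralParam hx, norm_polySpiralParam (mem_Ici.1 hy)] at hnorm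
  exact (strictMonoOn_rpow_Ici_of_exponent_pos hpβ).injOn hx hy
    (mul_left_cancel₀ (by positivity) hnorm)

theorem image_polySpiralParam (hp : 0 < p) (hβ : 0 < β) :
    polySpiralParam p β '' Icc 0 1 = polySpiral p := by
  apply Subset.antisymm
  · rintro _ ⟨x, hx, rfl⟩
    rcases hx.1.eq_or_lt with rfl | hx0
    · exact Or.inr (polySpiralParam_zero (by positivity))
    refine Or.inl ⟨2 * π * x ^ (-β), ?_, (polySpiralParam_eq_spiralMap hx0).symm⟩
    have : 1 ≤ x ^ (-β) := one_le_rpow_of_pos_of_le_one_of_nonpos hx0 hx.2 (by linarith)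
    show 2 * π ≤ 2 * π * x ^ (-β)
    nlinarith [pi_pos]
  · rintro _ (⟨t, ht, rfl⟩ | rfl)
    · have ht0 : 0 < t := lt_of_lt_of_le (by positivity) ht
      refine ⟨(2 * π / t) ^ β⁻¹, ⟨by positivity, rpow_le_one (by positivity)
        ((div_le_one ht0).2 ht) (by positivity)⟩, ?_⟩
      rw [polySpiralParam_eq_spiralMap (by positivity), ← rpow_mul (by positivity),
        inv_mul_eq_div, neg_div, div_self hβ.ne', rpow_neg_one, inv_div, mul_div_cancel₀ _
        (by positivity)]
    · exact ⟨0, ⟨le_rfl, zero_le_one⟩, polySpiralParam_zero (by positivity)⟩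

theorem exists_hasDerivAt_polySpiralParam_norm_le {x : ℝ} (hp : 0 < p) (hβ : 0 < β)
    (hx : 0 < x) (hx1 : x ≤ 1) :
    ∃ f', HasDerivAt (polySpiralParam p β) f' x ∧
      ‖f'‖ ≤ (2 * π) ^ (-p) * (p * β + 2 * π * β) * x ^ (p * β - β - 1) := by
  have hr : HasDerivAt (fun y => (2 * π) ^ (-p) * y ^ (p * β))
      ((2 * π) ^ (-p) * (p * β * x ^ (p * β - 1))) x :=
    (hasDerivAt_rpow_const (Or.inl hx.ne')).const_mul _
  have hθ : HasDerivAt (fun y => 2 * π * y ^ (-β)) (2 * π * (-β * x ^ (-β - 1))) x :=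
    (hasDerivAt_rpow_const (Or.inl hx.ne')).const_mul _
  obtain ⟨f', hf', hbound⟩ := exists_hasDerivAt_polar_norm_le hr hθ
  refine ⟨f', hf', hbound.trans ?_⟩
  have hexp : x ^ (p * β) * x ^ (-β - 1) = x ^ (p * β - β - 1) := by
    rw [← rpow_add hx]
    ring_nf
  have hmono : x ^ (p * β - 1) ≤ x ^ (p * β - β - 1) :=
    rpow_le_rpow_of_exponent_ge hx hx1 (by linarith)
  have habs : |(2 * π) ^ (-p) * (p * β * x ^ (p * β - 1))| +
      |(2 * π) ^ (-p) * x ^ (p * β)| * |2 * π * (-β * x ^ (-β - 1))| =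
      (2 * π) ^ (-p) * (p * β) * x ^ (p * β - 1) +
        (2 * π) ^ (-p) * (2 * π * β) * (x ^ (p * β) * x ^ (-β - 1)) := by
    rw [abs_of_pos (by positivity), abs_of_pos (by positivity), abs_of_neg (mul_neg_of_pos_of_neg
      (by positivity) (mul_neg_of_neg_of_pos (neg_lt_zero.2 hβ) (rpow_pos_of_pos hx _)))]
    ring
  rw [habs, hexp]
  linarith [mul_le_mul_of_nonneg_left hmono (by positivity : 0 ≤ (2 * π) ^ (-p) * (p * β))]

end PolySpiralParam

theorem polySpiral_isHolderArc_of_lt {p α : ℝ} (hα0 : 0 < α) (hα1 : α ≤ 1) (hαp : α < p) :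
    IsHolderArc (polySpiral p) α := by
  have hp : 0 < p := hα0.trans hαp
  set β := α / (p - α)
  have hβ : 0 < β := div_pos hα0 (sub_pos.2 hαp)
  have hαβ : α * (β + 1) = p * β := by
    have hpα : p - α ≠ 0 := (sub_pos.2 hαp).ne'
    simp only [β]
    field_simp
    ring
  refine ⟨polySpiralParam p β, (injOn_polySpiralParam (by positivity)).mono Icc_subset_Ici_self,
    image_polySpiralParam hp hβ, ?_⟩
  refine exists_holder_bound_of_growth_of_lipschitz hα0 hα1 (γ := β + 1) (by linarith)
    (K₁ := (2 * π) ^ (-p)) (by positivity) (K₂ := (2 * π) ^ (-p) * (p * β + 2 * π * β))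
    (by positivity) (fun x hx => ?_) fun x y hx hxy hy => ?_
  · rw [norm_polySpiralParam hx.1, hαβ]
  · have he : (α - 1) * (β + 1) = p * β - β - 1 := by linarith
    have he0 : (α - 1) * (β + 1) ≤ 0 :=
      mul_nonpos_of_nonpos_of_nonneg (by linarith) (by linarith)
    rw [he] at he0 ⊢
    exact norm_sub_le_of_norm_deriv_le_rpow (by positivity) he0 hx hxy
      fun ξ hξ => exists_hasDerivAt_polySpiralParam_norm_le hp hβ (hx.trans_le hξ.1)
        (hξ.2.trans hy)

/-- For `p > 0` and `s > 1`, the polynomial spiral `S_p` is a `(1/s)`-Hölder arc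
iff `ps > 1`. -/
theorem polySpiral_isHolderArc_iff (p s : ℝ) (hp : 0 < p) (hs : 1 < s) :
    IsHolderArc (polySpiral p) (1 / s) ↔ 1 < p * s := by
  have hs0 : 0 < s := zero_lt_one.trans hs
  rw [← div_lt_iff₀ hs0]
  exact ⟨lt_of_isHolderArc_polySpiral hp (by positivity),
    polySpiral_isHolderArc_of_lt (by positivity) ((div_le_one hs0).2 hs.le)⟩
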